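/- TPE expected improvement formula: under the TPE model p(x|y) = l(x) 1_{y<y*} + g(x) 1_{y≥y*} with γ = P(y < y*), the expected improvement EI_{y*}(x) = ∫_{-∞}^{y*} (y* - y) p(y|x) dy equals l(x)(γ y* - ∫_{-∞}^{y*} y p(y) dy) / (γ l(x) + (1-γ) g(x)); in particular EI_{y*}(x) is proportional to (γ + (g(x)/l(x))(1-γ))^{-1} wherever l(x) > 0. -/

import Mathlib

open MeasureTheory Set

/-! On `{y < y*}` the TPE likelihood `p(x|y)` is the constant `l(x)`, so the Bayes posterior
there is `l(x) p(y) / p(x)` and the expected improvement factors as `l(x) / p(x)` times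
`∫_{y < y*} (y* - y) p(y) dy = γ y* - ∫_{y < y*} y p(y) dy`. Dividing numerator and denominator
by `l(x)` gives the second form. -/

theorem MeasureTheory.IntegrableOn.Iio_of_locallyIntegrable {X E : Type*} [MeasurableSpace X]
    [ConditionallyCompleteLinearOrder X] [TopologicalSpace X] [OrderTopology X]
    [NormedAddCommGroup E] {μ : Measure X} {f : X → E} (hf : LocallyIntegrable f μ) {c : X}
    (hc : IntegrableOn f (Iio c) μ) (b : X) : IntegrableOn f (Iio b) μ :=
  (hc.union (hf.integrableOn_isCompact isCompact_Icc)).mono_set fun y hy =>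
    (lt_or_ge y c).imp id fun hcy => ⟨hcy, (mem_Iio.mp hy).le⟩

theorem MeasureTheory.integral_const_sub_mul {μ : Measure ℝ} {p : ℝ → ℝ} (s : ℝ)
    (hp : Integrable p μ) (hyp : Integrable (fun y => y * p y) μ) :
    ∫ y, (s - y) * p y ∂μ = s * ∫ y, p y ∂μ - ∫ y, y * p y ∂μ := by
  simp_rw [sub_mul]
  rw [integral_sub (hp.const_mul s) hyp, integral_const_mul]

theorem tpe_expected_improvement_general {𝒳 : Type*}
    (py : ℝ → ℝ)
    (hpyint : Integrable py)
    (hyint : IntegrableOn (fun y => y * py y) (Iio ystar))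
    (ystar : ℝ) (l g : 𝒳 → ℝ)
    (γ : ℝ) (hγ : γ = ∫ y in Iio ystar, py y)
    (px : 𝒳 → ℝ) (hpx : ∀ x, px x = γ * l x + (1 - γ) * g x)
    (pxy : 𝒳 → ℝ → ℝ) (hpxy : ∀ x y, pxy x y = if y < ystar then l x else g x)
    (EI : 𝒳 → ℝ)
    (hEI : ∀ x, EI x = ∫ y in Iio ystar, (ystar - y) * (pxy x y * py y / px x)) :
    (∀ x, EI x =
        l x * (γ * ystar - ∫ y in Iio ystar, y * py y) / (γ * l x + (1 - γ) * g x)) ∧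
      (∀ x, 0 < l x → EI x =
        (γ * ystar - ∫ y in Iio ystar, y * py y) * (γ + g x / l x * (1 - γ))⁻¹) := by
  -- `hyint` speaks of an auto-bound endpoint `ystar✝`, not of the `ystar` bound after it.
  have hyint' : IntegrableOn (fun y => y * py y) (Iio ystar) :=
    hyint.Iio_of_locallyIntegrable (hpyint.locallyIntegrable.continuous_mul continuous_id) ystar
  have hEI' : ∀ x, EI x =
      l x * (γ * ystar - ∫ y in Iio ystar, y * py y) / (γ * l x + (1 - γ) * g x) := by
    intro x
    have hposterior : EqOn (fun y => (ystar - y) * (pxy x y * py y / px x))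
        (fun y => l x / px x * ((ystar - y) * py y)) (Iio ystar) := fun y hy => by
      simp only [hpxy, if_pos (mem_Iio.mp hy)]
      ring
    rw [hEI, setIntegral_congr_fun measurableSet_Iio hposterior, integral_const_mul,
      integral_const_sub_mul ystar hpyint.integrableOn hyint', ← hγ, hpx]
    ring
  refine ⟨hEI', fun x hx => ?_⟩
  rw [hEI']
  field_simp

/-- TPE expected improvement formula: under the model
`p(x|y) = l(x) 1_{y<y*} + g(x) 1_{y≥y*}` with `γ = P(y < y*)` and Bayes' rule
`p(y|x) = p(x|y) p(y) / p(x)`, `p(x) = γ l(x) + (1-γ) g(x)`, the expected improvement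
`EI_{y*}(x) = ∫_{-∞}^{y*} (y* - y) p(y|x) dy` equals
`l(x) (γ y* - ∫_{-∞}^{y*} y p(y) dy) / (γ l(x) + (1-γ) g(x))`; in particular, where
`l(x) > 0` it equals `(γ y* - ∫_{-∞}^{y*} y p(y) dy) · (γ + (g(x)/l(x))(1-γ))⁻¹`. -/
theorem tpe_expected_improvement {𝒳 : Type*}
    (py : ℝ → ℝ) (hpy0 : ∀ y, 0 ≤ py y)
    (hpy1 : ∫ y, py y = 1) (hpyint : Integrable py)
    (hyint : IntegrableOn (fun y => y * py y) (Iio ystar))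
    (ystar : ℝ) (l g : 𝒳 → ℝ)
    (hl : ∀ x, 0 ≤ l x) (hg : ∀ x, 0 ≤ g x)
    (γ : ℝ) (hγ : γ = ∫ y in Iio ystar, py y)
    (px : 𝒳 → ℝ) (hpx : ∀ x, px x = γ * l x + (1 - γ) * g x)
    (pxy : 𝒳 → ℝ → ℝ) (hpxy : ∀ x y, pxy x y = if y < ystar then l x else g x)
    (EI : 𝒳 → ℝ)
    (hEI : ∀ x, EI x = ∫ y in Iio ystar, (ystar - y) * (pxy x y * py y / px x)) :
    (∀ x, EI x =
        l x * (γ * ystar - ∫ y in Iio ystar, y * py y) / (γ * l x + (1 - γ) * g x)) ∧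
      (∀ x, 0 < l x → EI x =
        (γ * ystar - ∫ y in Iio ystar, y * py y) * (γ + g x / l x * (1 - γ))⁻¹) :=
  tpe_expected_improvement_general py hpyint hyint ystar l g γ hγ px hpx pxy hpxy EI hEI
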